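/- In a (P₂+P₃, C₄)-free graph G containing an induced 5-cycle C = v₁...v₅, the set T of vertices outside C with no neighbor on C is an independent set, and T is anticomplete to A ∪ B ∪ D (vertices with exactly 1, 2 consecutive, or 3 consecutive neighbors on C respectively). -/

import Mathlib

open SimpleGraph

/-- A proper coloring of `G` with colors in `Fin ℓ`. -/
def IsProperColoring {V : Type*} (G : SimpleGraph V) (ℓ : ℕ) (f : V → Fin ℓ) : Prop :=
  ∀ ⦃a b : V⦄, G.Adj a b → f a ≠ f b

/-- A walk in the reconfiguration graph `R_ℓ(G)`: a sequence `c 0, c 1, …, c m` of proper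
`ℓ`-colorings of `G` in which consecutive colorings differ on at most one vertex. -/
def IsRecolorSeq {V : Type*} (G : SimpleGraph V) (ℓ m : ℕ) (c : ℕ → V → Fin ℓ) : Prop :=
  (∀ i ≤ m, IsProperColoring G ℓ (c i)) ∧
    ∀ i < m, ∀ a b : V, a ≠ b → c i a ≠ c (i + 1) a → c i b = c (i + 1) b

/-- The number of times the vertex `a` is recolored along the sequence `c 0, …, c m`. -/
def recolorCount {V : Type*} {ℓ : ℕ} (m : ℕ) (c : ℕ → V → Fin ℓ) (a : V) : ℕ :=
  ((Finset.range m).filter fun i => c i a ≠ c (i + 1) a).card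

/-- The cycle `Cₙ` on `Fin n` (for `n ≥ 3`). -/
def cyc (n : ℕ) [NeZero n] : SimpleGraph (Fin n) := SimpleGraph.fromRel fun a b => a + 1 = b

/-- The graph `P₂ + P₃`, the disjoint union of an edge and a path on three vertices. -/
def p2p3 : SimpleGraph (Fin 5) := SimpleGraph.fromRel fun a b =>
  (a = 0 ∧ b = 1) ∨ (a = 2 ∧ b = 3) ∨ (a = 3 ∧ b = 4)

/-- Membership in `A`: a vertex outside the 5-cycle with exactly one neighbor on it. -/
def inA5 {V : Type*} (G : SimpleGraph V) (v : Fin 5 → V) (u : V) : Prop :=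
  (∀ i, u ≠ v i) ∧ ∃ i : Fin 5, ∀ j, G.Adj u (v j) ↔ j = i

/-- Membership in `B`: a vertex outside the 5-cycle whose neighbors on the cycle are
exactly two consecutive vertices. -/
def inB5 {V : Type*} (G : SimpleGraph V) (v : Fin 5 → V) (u : V) : Prop :=
  (∀ i, u ≠ v i) ∧ ∃ i : Fin 5, ∀ j, G.Adj u (v j) ↔ (j = i ∨ j = i + 1)

/-- Membership in `D`: a vertex outside the 5-cycle whose neighbors on the cycle are
exactly three consecutive vertices. -/
def inD5 {V : Type*} (G : SimpleGraph V) (v : Fin 5 → V) (u : V) : Prop :=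
  (∀ i, u ≠ v i) ∧ ∃ i : Fin 5, ∀ j, G.Adj u (v j) ↔ (j = i - 1 ∨ j = i ∨ j = i + 1)

/-- Membership in `T`: a vertex outside the 5-cycle with no neighbor on it. -/
def inT5 {V : Type*} (G : SimpleGraph V) (v : Fin 5 → V) (u : V) : Prop :=
  (∀ i, u ≠ v i) ∧ ∀ i, ¬ G.Adj u (v i)

/-!
An edge `t t'` inside `T` together with the path `v₀ v₁ v₂` is an induced `P₂ + P₃`.
A vertex `u` of `A ∪ B ∪ D` has a neighbour `vᵢ` on `C` but misses both `vᵢ₊₂` and `vᵢ₊₃`;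
if `u` had a neighbour `t ∈ T`, then the edge `vᵢ₊₂ vᵢ₊₃` together with the path `t u vᵢ`
would be an induced `P₂ + P₃`.
-/

lemma nonempty_p2p3_embedding {V : Type*} {G : SimpleGraph V} {a₀ a₁ a₂ a₃ a₄ : V}
    (e01 : G.Adj a₀ a₁) (e23 : G.Adj a₂ a₃) (e34 : G.Adj a₃ a₄)
    (n02 : ¬ G.Adj a₀ a₂) (n03 : ¬ G.Adj a₀ a₃) (n04 : ¬ G.Adj a₀ a₄)
    (n12 : ¬ G.Adj a₁ a₂) (n13 : ¬ G.Adj a₁ a₃) (n14 : ¬ G.Adj a₁ a₄)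
    (n24 : ¬ G.Adj a₂ a₄)
    (d02 : a₀ ≠ a₂) (d03 : a₀ ≠ a₃) (d04 : a₀ ≠ a₄)
    (d12 : a₁ ≠ a₂) (d13 : a₁ ≠ a₃) (d14 : a₁ ≠ a₄) (d24 : a₂ ≠ a₄) :
    Nonempty (p2p3 ↪g G) := by
  refine ⟨⟨⟨![a₀, a₁, a₂, a₃, a₄], fun x y h => ?_⟩, fun {x y} => ?_⟩⟩
  · fin_cases x <;> fin_cases y <;>
      simp_all [e01.ne, e23.ne, e34.ne, e01.ne', e23.ne', e34.ne',
        d02.symm, d03.symm, d04.symm, d12.symm, d13.symm, d14.symm, d24.symm]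
  · change G.Adj (![a₀, a₁, a₂, a₃, a₄] x) (![a₀, a₁, a₂, a₃, a₄] y) ↔ p2p3.Adj x y
    fin_cases x <;> fin_cases y <;>
      simp_all [p2p3, G.adj_comm]

lemma cyc_five_adj_add_one (i : Fin 5) : (cyc 5).Adj i (i + 1) := by
  simp only [cyc, fromRel_adj]
  revert i
  decide

lemma cyc_five_not_adj_add_two (i : Fin 5) : ¬ (cyc 5).Adj i (i + 2) := by
  simp only [cyc, fromRel_adj]
  revert i
  decide

lemma exists_adj_not_adj_add_two_not_adj_add_three {V : Type*} {G : SimpleGraph V}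
    {v : Fin 5 → V} {u : V} (hu : inA5 G v u ∨ inB5 G v u ∨ inD5 G v u) :
    ∃ i : Fin 5, G.Adj u (v i) ∧ ¬ G.Adj u (v (i + 2)) ∧ ¬ G.Adj u (v (i + 3)) := by
  rcases hu with ⟨-, i, hi⟩ | ⟨-, i, hi⟩ | ⟨-, i, hi⟩ <;>
    refine ⟨i, (hi i).2 (by simp), fun h => ?_, fun h => ?_⟩ <;>
    grind

section InducedFiveCycle

variable {V : Type*} {G : SimpleGraph V} {v : Fin 5 → V}
  (hP : ¬ Nonempty (p2p3 ↪g G)) (hv : Function.Injective v)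
  (hC : ∀ i j, G.Adj (v i) (v j) ↔ (cyc 5).Adj i j)
include hP hv hC

lemma not_adj_of_inT5_of_inT5 {t t' : V} (ht : inT5 G v t) (ht' : inT5 G v t') :
    ¬ G.Adj t t' := fun htt' =>
  hP <| nonempty_p2p3_embedding htt' ((hC 0 1).2 (cyc_five_adj_add_one 0))
    ((hC 1 2).2 (cyc_five_adj_add_one 1)) (ht.2 0) (ht.2 1) (ht.2 2) (ht'.2 0) (ht'.2 1)
    (ht'.2 2) (fun h => cyc_five_not_adj_add_two 0 ((hC 0 2).1 h))
    (ht.1 0) (ht.1 1) (ht.1 2) (ht'.1 0) (ht'.1 1) (ht'.1 2) (hv.ne (by decide))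

lemma not_adj_of_inT5_of_adj_of_not_adj {t u : V} {i : Fin 5} (ht : inT5 G v t)
    (hu : ∀ j, u ≠ v j) (hi : G.Adj u (v i))
    (hi₂ : ¬ G.Adj u (v (i + 2))) (hi₃ : ¬ G.Adj u (v (i + 3))) : ¬ G.Adj t u := by
  intro htu
  have h₂₁ : i + 2 + 1 = i + 3 := by grind
  have h₃₂ : i + 3 + 2 = i := by grind
  refine hP <| nonempty_p2p3_embedding (a₀ := v (i + 2)) (a₁ := v (i + 3))
    ((hC _ _).2 (h₂₁ ▸ cyc_five_adj_add_one (i + 2))) htu hi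
    (fun h => ht.2 _ h.symm) (fun h => hi₂ h.symm)
    (fun h => cyc_five_not_adj_add_two i ((hC _ _).1 h.symm))
    (fun h => ht.2 _ h.symm) (fun h => hi₃ h.symm)
    (fun h => cyc_five_not_adj_add_two (i + 3) (by rw [h₃₂]; exact (hC _ _).1 h))
    (ht.2 i) (ht.1 _).symm (hu _).symm (hv.ne (by simp)) (ht.1 _).symm (hu _).symm
    (hv.ne (by simp)) (ht.1 i)

end InducedFiveCycle

theorem stmt2_general {V : Type*} (G : SimpleGraph V)
    (hP : ¬ Nonempty (p2p3 ↪g G))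
    (v : Fin 5 → V) (hv : Function.Injective v)
    (hC : ∀ i j, G.Adj (v i) (v j) ↔ (cyc 5).Adj i j) :
    (∀ t t', inT5 G v t → inT5 G v t' → ¬ G.Adj t t') ∧
    (∀ t u, inT5 G v t → (inA5 G v u ∨ inB5 G v u ∨ inD5 G v u) → ¬ G.Adj t u) := by
  refine ⟨fun t t' => not_adj_of_inT5_of_inT5 hP hv hC, fun t u ht hu => ?_⟩
  obtain ⟨i, hi, hi₂, hi₃⟩ := exists_adj_not_adj_add_two_not_adj_add_three hu
  have hout : ∀ j, u ≠ v j := by rcases hu with hu | hu | hu <;> exact hu.1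
  exact not_adj_of_inT5_of_adj_of_not_adj hP hv hC ht hout hi hi₂ hi₃

/-- in a `(P₂+P₃, C₄)`-free graph with an induced 5-cycle, `T` is an
independent set and `T` is anticomplete to `A ∪ B ∪ D`. -/
theorem stmt2 {V : Type*} (G : SimpleGraph V)
    (hP : ¬ Nonempty (p2p3 ↪g G)) (hC4 : ¬ Nonempty (cyc 4 ↪g G))
    (v : Fin 5 → V) (hv : Function.Injective v)
    (hC : ∀ i j, G.Adj (v i) (v j) ↔ (cyc 5).Adj i j) :
    (∀ t t', inT5 G v t → inT5 G v t' → ¬ G.Adj t t') ∧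
    (∀ t u, inT5 G v t → (inA5 G v u ∨ inB5 G v u ∨ inD5 G v u) → ¬ G.Adj t u) :=
  stmt2_general G hP v hv hC
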